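/- arXiv:1811.11184 — 2 statements merged into one kernel-verified Lean document; each statement's English description precedes it below -/
import Mathlib

section
/- (Parameter shift rule.) Let G and Q be n×n Hermitian complex matrices, r > 0 with G² = r²·I, and ψ ∈ ℂⁿ. Define f : ℝ → ℂ by f(μ) = ⟨exp(-i·μ·G)ψ, Q·exp(-i·μ·G)ψ⟩. Then for every real μ, f has derivative r·( f(μ + π/(4r)) − f(μ − π/(4r)) ) at μ. -/
open Matrix

theorem exp_formula {n : ℕ} (G : Matrix (Fin n) (Fin n) ℂ) (r : ℝ) (hr : (r : ℂ) ≠ 0)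
    (hG2 : G ^ 2 = ((r : ℂ) ^ 2) • (1 : Matrix (Fin n) (Fin n) ℂ)) (t : ℝ) :
    NormedSpace.exp ((-Complex.I * (t : ℂ)) • G) =
      ((Real.cos (r * t) : ℂ)) • (1 : Matrix (Fin n) (Fin n) ℂ) +
        ((-Complex.I / (r : ℂ)) * (Real.sin (r * t) : ℂ)) • G := by
  have hGp : ∀ m : ℕ, G ^ (2 * m) = (((r : ℂ) ^ 2) ^ m) • (1 : Matrix (Fin n) (Fin n) ℂ) := by
    intro m; rw [pow_mul, hG2, smul_pow, one_pow]
  have h1 : (-Complex.I * (t : ℂ)) ^ 2 = -((t : ℂ) ^ 2) := by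
    rw [mul_pow, neg_pow, Complex.I_sq]; ring
  rw [NormedSpace.exp_eq_tsum ℂ]
  refine HasSum.tsum_eq ?_
  rw [Complex.ofReal_cos, Complex.ofReal_sin]
  refine HasSum.even_add_odd ?_ ?_
  · have hc := (Complex.hasSum_cos ((r * t : ℝ) : ℂ)).smul_const
      (1 : Matrix (Fin n) (Fin n) ℂ)
    push_cast at hc ⊢
    convert hc using 1
    case e'_3 => rfl
    funext m
    rw [smul_pow, hGp m, smul_smul, smul_smul]
    congr 1
    rw [pow_mul _ 2 m, h1, neg_pow, mul_pow, pow_mul, pow_mul]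
    have h2 : (((2 * m).factorial : ℕ) : ℂ) ≠ 0 := Nat.cast_ne_zero.mpr (Nat.factorial_ne_zero _)
    field_simp
  · have hs := ((Complex.hasSum_sin ((r * t : ℝ) : ℂ)).mul_left
      (-Complex.I / (r : ℂ))).smul_const G
    push_cast at hs ⊢
    convert hs using 1
    case e'_3 => rfl
    funext m
    have hGq : G ^ (2 * m + 1) = (((r : ℂ) ^ 2) ^ m) • G := by
      rw [pow_succ, hGp m, smul_mul_assoc, one_mul]
    rw [smul_pow, hGq, smul_smul, smul_smul]
    congr 1
    rw [pow_succ, pow_mul _ 2 m, h1, neg_pow, mul_pow,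
      pow_succ (r : ℂ) (2 * m), pow_succ (t : ℂ) (2 * m),
      pow_mul (r : ℂ) 2 m, pow_mul (t : ℂ) 2 m]
    have h2 : (((2 * m + 1).factorial : ℕ) : ℂ) ≠ 0 := Nat.cast_ne_zero.mpr (Nat.factorial_ne_zero _)
    field_simp


set_option maxHeartbeats 1600000 in

set_option maxHeartbeats 1600000 in
/-- **parameter shift rule.** Let `G`, `Q` be Hermitian, `r > 0` with
`G² = r²·I`, and `f(μ) = ⟨exp(-iμG)ψ, Q exp(-iμG)ψ⟩` (with `⟨u, v⟩ = star u ⬝ᵥ v`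
the standard Hermitian inner product on `ℂⁿ`). Then `f` has derivative
`r·(f(μ + π/(4r)) − f(μ − π/(4r)))` at every `μ`. -/
theorem parameter_shift_rule {n : ℕ} (G Q : Matrix (Fin n) (Fin n) ℂ)
    (hG : G.IsHermitian) (hQ : Q.IsHermitian)
    (r : ℝ) (hr : 0 < r)
    (hG2 : G ^ 2 = ((r : ℂ) ^ 2) • (1 : Matrix (Fin n) (Fin n) ℂ))
    (ψ : Fin n → ℂ) (μ : ℝ)
    (f : ℝ → ℂ)
    (hf : f = fun t : ℝ =>
      star ((NormedSpace.exp ((-Complex.I * (t : ℂ)) • G)).mulVec ψ) ⬝ᵥ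
        Q.mulVec ((NormedSpace.exp ((-Complex.I * (t : ℂ)) • G)).mulVec ψ)) :
    HasDerivAt f
      ((r : ℂ) * (f (μ + Real.pi / (4 * r)) - f (μ - Real.pi / (4 * r)))) μ := by
  have hr0 : (r : ℝ) ≠ 0 := ne_of_gt hr
  have hrC : (r : ℂ) ≠ 0 := by exact_mod_cast hr0
  set A : ℂ := star ψ ⬝ᵥ Q.mulVec ψ with hA
  set B1 : ℂ := star ψ ⬝ᵥ Q.mulVec (G.mulVec ψ) with hB1
  set B2 : ℂ := star (G.mulVec ψ) ⬝ᵥ Q.mulVec ψ with hB2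
  set C : ℂ := star (G.mulVec ψ) ⬝ᵥ Q.mulVec (G.mulVec ψ) with hC
  have key : ∀ t : ℝ, f t =
      ((Real.cos (r * t) : ℂ) * (Real.cos (r * t) : ℂ)) * A
      + (Real.cos (r * t) : ℂ) * ((-Complex.I / (r : ℂ)) * (Real.sin (r * t) : ℂ)) * (B1 - B2)
      - (((-Complex.I / (r : ℂ)) * (Real.sin (r * t) : ℂ)) * ((-Complex.I / (r : ℂ)) * (Real.sin (r * t) : ℂ))) * C := by
    intro t
    rw [hf]
    simp only [exp_formula G r hrC hG2 t]
    simp only [Matrix.add_mulVec, Matrix.smul_mulVec, Matrix.one_mulVec, star_add,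
      star_smul, Matrix.mulVec_add, Matrix.mulVec_smul, dotProduct_add,
      add_dotProduct, smul_dotProduct, dotProduct_smul, smul_eq_mul,
      star_mul', star_div₀, star_neg, Complex.star_def, Complex.conj_I, Complex.conj_ofReal,
      _root_.map_one]
    rw [hA, hB1, hB2, hC]
    ring
  have hfun : f = fun t : ℝ =>
      ((Real.cos (r * t) : ℂ) * (Real.cos (r * t) : ℂ)) * A
      + (Real.cos (r * t) : ℂ) * ((-Complex.I / (r : ℂ)) * (Real.sin (r * t) : ℂ)) * (B1 - B2)
      - (((-Complex.I / (r : ℂ)) * (Real.sin (r * t) : ℂ)) * ((-Complex.I / (r : ℂ)) * (Real.sin (r * t) : ℂ))) * C := funext key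
  rw [hfun]
  -- derivatives
  have h0 : HasDerivAt (fun t : ℝ => r * t) r μ := by
    simpa using (hasDerivAt_id μ).const_mul r
  have hc : HasDerivAt (fun t : ℝ => ((Real.cos (r * t) : ℝ) : ℂ))
      ((-Real.sin (r * μ) * r : ℝ) : ℂ) μ :=
    ((Real.hasDerivAt_cos (r * μ)).comp μ h0).ofReal_comp
  have hs : HasDerivAt (fun t : ℝ => ((-Complex.I / (r : ℂ)) * ((Real.sin (r * t) : ℝ) : ℂ)))
      ((-Complex.I / (r : ℂ)) * ((Real.cos (r * μ) * r : ℝ) : ℂ)) μ :=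
    (((Real.hasDerivAt_sin (r * μ)).comp μ h0).ofReal_comp).const_mul _
  have hF := (((hc.mul hc).mul_const A).add ((hc.mul hs).mul_const (B1 - B2))).sub
    ((hs.mul hs).mul_const C)
  convert hF using 1
  case e'_4 => rfl
  case e'_8 => rfl
  -- value identity
  have e1 : r * (μ + Real.pi / (4 * r)) = r * μ + Real.pi / 4 := by field_simp
  have e2 : r * (μ - Real.pi / (4 * r)) = r * μ - Real.pi / 4 := by field_simp
  beta_reduce
  rw [e1, e2, Real.cos_add, Real.sin_add, Real.cos_sub, Real.sin_sub,
    Real.cos_pi_div_four, Real.sin_pi_div_four]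
  have h2 : ((Real.sqrt 2 : ℝ) : ℂ) ^ 2 = 2 := by
    norm_cast
    exact Real.sq_sqrt (by norm_num)
  have hI : Complex.I ^ 2 = -1 := Complex.I_sq
  push_cast
  ring_nf
  rw [h2]
  ring
end

section
/- Define, for r ∈ ℝ, the 3×3 real matrix M^S(r) = [[1,0,0],[0,e^{−r},0],[0,0,e^{r}]]. Then for every r and every nonzero real s, the function r ↦ M^S(r) has derivative (1/(2·sinh s))·( M^S(r + s) − M^S(r − s) ) at r. -/
open Matrix

-- Equip matrices with the elementwise supremum norm, so that `HasDerivAt` makes sense.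
attribute [local instance] Matrix.normedAddCommGroup Matrix.normedSpace

/-- Heisenberg-picture representation of the CV squeezing gate `S(r)` (zero squeezing angle). -/
noncomputable def MS (r : ℝ) : Matrix (Fin 3) (Fin 3) ℝ :=
  !![1, 0, 0;
     0, Real.exp (-r), 0;
     0, 0, Real.exp r]

/-- **parameter shift rule for the squeezing gate.**
For any nonzero shift `s`, `r ↦ M^S(r)` has derivative
`(1/(2·sinh s))·(M^S(r+s) − M^S(r−s))` at every `r`. -/
theorem hasDerivAt_MS (r s : ℝ) (hs : s ≠ 0) :
    HasDerivAt MS ((1 / (2 * Real.sinh s)) • (MS (r + s) - MS (r - s))) r := by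
  have hsh : Real.sinh s ≠ 0 := Real.sinh_ne_zero.2 hs
  have key : ∀ i j : Fin 3,
      HasDerivAt (fun r => MS r i j)
        (((1 / (2 * Real.sinh s)) • (MS (r + s) - MS (r - s))) i j) r := by
    intro i j
    fin_cases i <;> fin_cases j <;>
      simp only [MS, Matrix.smul_apply, Matrix.sub_apply, Matrix.cons_val', Matrix.cons_val_zero,
        Matrix.cons_val_one, Matrix.head_cons, Matrix.empty_val', Matrix.cons_val_fin_one,
        Matrix.head_fin_const, Matrix.cons_val_two, Matrix.tail_cons, smul_eq_mul]
    case _ => simpa using (hasDerivAt_const r (1:ℝ))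
    case _ => simpa using (hasDerivAt_const r (0:ℝ))
    case _ => simpa using (hasDerivAt_const r (0:ℝ))
    case _ => simpa using (hasDerivAt_const r (0:ℝ))
    case _ =>
      have h : HasDerivAt (fun r : ℝ => Real.exp (-r)) (-Real.exp (-r)) r := by
        simpa [Function.comp_def] using (Real.hasDerivAt_exp (-r)).comp r (hasDerivAt_neg r)
      convert h using 1
      case e'_8 => rfl
      have hne : Real.exp s - Real.exp (-s) ≠ 0 := by
        intro h0; apply hsh; rw [Real.sinh_eq]; rw [h0]; simp
      show 1 / (2 * Real.sinh s) * (Real.exp (-(r + s)) - Real.exp (-(r - s))) = -Real.exp (-r)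
      rw [Real.sinh_eq]
      rw [neg_add, sub_eq_add_neg r s, neg_add, neg_neg, Real.exp_add, Real.exp_add]
      field_simp
      ring
    case _ => simpa using (hasDerivAt_const r (0:ℝ))
    case _ => simpa using (hasDerivAt_const r (0:ℝ))
    case _ => simpa using (hasDerivAt_const r (0:ℝ))
    case _ =>
      convert Real.hasDerivAt_exp r using 1
      case e'_8 => rfl
      have hne : Real.exp s - Real.exp (-s) ≠ 0 := by
        intro h0; apply hsh; rw [Real.sinh_eq]; rw [h0]; simp
      show 1 / (2 * Real.sinh s) * (Real.exp (r + s) - Real.exp (r - s)) = Real.exp r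
      rw [Real.sinh_eq]
      rw [Real.exp_add, sub_eq_add_neg r s, Real.exp_add]
      field_simp
  have : HasDerivAt (fun r i j => MS r i j)
      ((1 / (2 * Real.sinh s)) • (MS (r + s) - MS (r - s))) r := by
    apply hasDerivAt_pi.2
    intro i
    exact hasDerivAt_pi.2 fun j => key i j
  exact this
end
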